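/- Let k₁, k₂ be real numbers, and let R : ℝ → ℝ^{3×3}, E_R : ℝ → ℝ^{3×3}, e_Ω : ℝ → ℝ³ be differentiable functions satisfying, for all t, E_R'(t) = −R(t)·(e_Ω(t))× − k₁ E_R(t) and e_Ω'(t) = k₂ (π_{so(3)}(R(t)ᵀ E_R(t)))∨. Then the function V₁(t) = (k₂/2)‖E_R(t)‖² + ‖e_Ω(t)‖² is differentiable with V₁'(t) = −k₁k₂‖E_R(t)‖² for all t, where ‖E_R‖² = ⟨E_R, E_R⟩ is the squared Frobenius norm. -/

import Mathlib

open Matrix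

/-- The skew-symmetric matrix `v×` associated to `v ∈ ℝ³`. -/
noncomputable def skewMat (v : Fin 3 → ℝ) : Matrix (Fin 3) (Fin 3) ℝ :=
  !![0, -v 2, v 1;
     v 2, 0, -v 0;
     -v 1, v 0, 0]

/-- Orthogonal projection `π_{so(3)}(A) = (A − Aᵀ)/2` onto skew-symmetric matrices. -/
noncomputable def pso3 (A : Matrix (Fin 3) (Fin 3) ℝ) : Matrix (Fin 3) (Fin 3) ℝ :=
  (2⁻¹ : ℝ) • (A - Aᵀ)

/-- The inverse `(·)∨` of the operator `(·)×`. -/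
noncomputable def vee (S : Matrix (Fin 3) (Fin 3) ℝ) : Fin 3 → ℝ :=
  ![S 2 1, S 0 2, S 1 0]

/-- The Frobenius inner product `⟨A, B⟩ = trace(Aᵀ B)`. -/
noncomputable def frob (A B : Matrix (Fin 3) (Fin 3) ℝ) : ℝ := (Aᵀ * B).trace

/-! The Lyapunov derivative splits into `k₂ ⟨E_R, E_R'⟩ + 2 e_Ω · e_Ω'`. The cross terms cancel
because `⟨E, R v×⟩ = ⟨Rᵀ E, v×⟩ = 2 v · (π_{so(3)}(Rᵀ E))∨`: only the skew part of `Rᵀ E` pairs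
with `v×`, and `(·)∨` is half the Frobenius pairing against `(·)×`. What remains is `−k₁k₂‖E_R‖²`. -/

lemma frob_eq_sum (A B : Matrix (Fin 3) (Fin 3) ℝ) : frob A B = ∑ i, ∑ j, A i j * B i j := by
  simp only [frob, trace, diag_apply, mul_apply, transpose_apply]
  exact Finset.sum_comm

lemma frob_sub_right (A B C : Matrix (Fin 3) (Fin 3) ℝ) :
    frob A (B - C) = frob A B - frob A C := by
  simp only [frob, Matrix.mul_sub, trace_sub]

lemma frob_neg_right (A B : Matrix (Fin 3) (Fin 3) ℝ) : frob A (-B) = -frob A B := by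
  simp only [frob, Matrix.mul_neg, trace_neg]

lemma frob_smul_right (c : ℝ) (A B : Matrix (Fin 3) (Fin 3) ℝ) :
    frob A (c • B) = c * frob A B := by
  simp only [frob, Matrix.mul_smul, trace_smul, smul_eq_mul]

lemma frob_mul_right (A B C : Matrix (Fin 3) (Fin 3) ℝ) :
    frob A (B * C) = frob (Bᵀ * A) C := by
  simp only [frob, transpose_mul, transpose_transpose, Matrix.mul_assoc]

lemma frob_skewMat (A : Matrix (Fin 3) (Fin 3) ℝ) (v : Fin 3 → ℝ) :
    frob A (skewMat v) = 2 * v ⬝ᵥ vee (pso3 A) := by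
  simp only [skewMat, frob_eq_sum, of_apply, cons_val', cons_val_fin_one, Fin.sum_univ_three,
    cons_val_zero, cons_val_one, cons_val, mul_zero, mul_neg, zero_add, add_zero, dotProduct, vee,
    pso3, Matrix.smul_apply, Matrix.sub_apply, transpose_apply, smul_eq_mul]
  ring

lemma frob_mul_skewMat (A B : Matrix (Fin 3) (Fin 3) ℝ) (v : Fin 3 → ℝ) :
    frob A (B * skewMat v) = 2 * v ⬝ᵥ vee (pso3 (Bᵀ * A)) := by
  rw [frob_mul_right, frob_skewMat]

lemma hasDerivAt_sum_sq {ι : Type*} [Fintype ι] {x : ℝ → ι → ℝ} {x' : ι → ℝ} {t : ℝ}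
    (hx : ∀ i, HasDerivAt (fun s => x s i) (x' i) t) :
    HasDerivAt (fun s => ∑ i, x s i ^ 2) (2 * x t ⬝ᵥ x') t := by
  have h := HasDerivAt.fun_sum fun i (_ : i ∈ Finset.univ) => (hx i).fun_pow 2
  refine h.congr_deriv ?_
  simp only [dotProduct, Finset.mul_sum, Nat.cast_ofNat]
  exact Finset.sum_congr rfl fun i _ => by ring

lemma hasDerivAt_frob_self {E : ℝ → Matrix (Fin 3) (Fin 3) ℝ} {E' : Matrix (Fin 3) (Fin 3) ℝ}
    {t : ℝ} (hE : ∀ i j, HasDerivAt (fun s => E s i j) (E' i j) t) :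
    HasDerivAt (fun s => frob (E s) (E s)) (2 * frob (E t) E') t := by
  have h := HasDerivAt.fun_sum fun i (_ : i ∈ Finset.univ) =>
    hasDerivAt_sum_sq (x := fun s => E s i) (hE i)
  simp only [frob_eq_sum, ← sq]
  refine h.congr_deriv ?_
  simp only [dotProduct, Finset.mul_sum]

/-- If `E_R' = −R (e_Ω)× − k₁ E_R` and `e_Ω' = k₂ (π_{so(3)}(Rᵀ E_R))∨` (entrywise
derivatives), then `V₁(t) = (k₂/2)‖E_R(t)‖² + ‖e_Ω(t)‖²` is differentiable with
`V₁'(t) = −k₁k₂‖E_R(t)‖²`, where `‖·‖` is the Frobenius norm. -/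
theorem stmt11 (k1 k2 : ℝ)
    (R E_R : ℝ → Matrix (Fin 3) (Fin 3) ℝ) (eΩ : ℝ → Fin 3 → ℝ)
    (hE : ∀ (t : ℝ) (i j : Fin 3), HasDerivAt (fun s => E_R s i j)
      ((-(R t * skewMat (eΩ t)) - k1 • E_R t) i j) t)
    (he : ∀ (t : ℝ) (i : Fin 3), HasDerivAt (fun s => eΩ s i)
      (k2 * vee (pso3 ((R t)ᵀ * E_R t)) i) t) :
    ∀ t : ℝ, HasDerivAt
      (fun s => k2 / 2 * frob (E_R s) (E_R s) + ∑ i, eΩ s i ^ 2)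
      (-(k1 * k2) * frob (E_R t) (E_R t)) t := by
  intro t
  have hV := ((hasDerivAt_frob_self (hE t)).const_mul (k2 / 2)).fun_add
    (hasDerivAt_sum_sq (x' := k2 • vee (pso3 ((R t)ᵀ * E_R t))) (he t))
  refine hV.congr_deriv ?_
  rw [frob_sub_right, frob_neg_right, frob_smul_right, frob_mul_skewMat, dotProduct_smul,
    smul_eq_mul]
  ring
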